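/- (Sampling gap lower bound of 1/r.) There exists an instance with ground set V = {e}, state space O = {o}, utility f(∅, (e,o)) = 0 and f({e}, (e,o)) = 1, and independence system I = {∅, {e}}, such that f is policywise submodular, and for a random set T containing e with probability r, E_T[f_avg(π*_T)] = r while f_avg(π*_V) = 1; hence f_avg(π*_V) / E_T[f_avg(π*_T)] = 1/r. -/

import Mathlib

/-! With a single state the realization is deterministic, and for the cardinality utility under
the free independence system the optimal policy restricted to `T` simply selects all of `T`.
Its value is therefore `|T|`, whose expectation over the random `T` is `Pr[e ∈ T] = r`, while
the unrestricted optimum is `1`. Since the cardinality is modular, the optimal marginal gain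
from candidates `R` disjoint from what was observed is `|R|` whatever the observations, which
gives policywise submodularity. -/

open Finset
open scoped Classical

variable {α O : Type*}

/-- An independence system on the (finite) ground type `α`:
a family of subsets containing `∅` and downward closed. -/
def IsIndepSystem [DecidableEq α] (I : Finset (Finset α)) : Prop :=
  ∅ ∈ I ∧ ∀ A ∈ I, ∀ B ⊆ A, B ∈ I

/-- The restricted family `I^R_S = {A | A ∪ S ∈ I, A ⊆ R}`. -/
def restrFam [Fintype α] [DecidableEq α] (I : Finset (Finset α)) (S R : Finset α) :
    Finset (Finset α) :=
  univ.filter fun A => A ∪ S ∈ I ∧ A ⊆ R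

/-- The (upper) rank of a family of sets: the largest cardinality of a member. -/
def rank (I : Finset (Finset α)) : ℕ := I.sup Finset.card

/-- A partial realization: a domain together with observed states on it. -/
structure PReal (α O : Type*) where
  dom : Finset α
  val : α → O

/-- A (full) realization `φ` is consistent with a partial realization `ψ`. -/
def Consistent (φ : α → O) (ψ : PReal α O) : Prop := ∀ e ∈ ψ.dom, φ e = ψ.val e

/-- `ψ` is a subrealization of `ψ'`. -/
def Subreal (ψ ψ' : PReal α O) : Prop :=
  ψ.dom ⊆ ψ'.dom ∧ ∀ e ∈ ψ.dom, ψ'.val e = ψ.val e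

/-- Conditional expectation of `g` given `Φ ∼ ψ`, w.r.t. the prior `p`. -/
noncomputable def cexp [Fintype α] [Fintype O] [DecidableEq α] (p : (α → O) → ℝ)
    (ψ : PReal α O) (g : (α → O) → ℝ) : ℝ :=
  (∑ φ : α → O, if Consistent φ ψ then p φ * g φ else 0) /
    (∑ φ : α → O, if Consistent φ ψ then p φ else 0)

/-- Conditional expected marginal utility `f_avg(π | ψ)` of a policy `π`
(modelled by the set `π φ` it selects under realization `φ`). -/
noncomputable def margAvg [Fintype α] [DecidableEq α] [Fintype O]
    (f : Finset α → (α → O) → ℝ) (p : (α → O) → ℝ) (ψ : PReal α O)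
    (π : (α → O) → Finset α) : ℝ :=
  cexp p ψ fun φ => f (ψ.dom ∪ π φ) φ - f ψ.dom φ

/-- Conditional expected marginal utility `f_avg(e | ψ)` of a single item. -/
noncomputable def itemMarg [Fintype α] [DecidableEq α] [Fintype O]
    (f : Finset α → (α → O) → ℝ) (p : (α → O) → ℝ) (ψ : PReal α O) (e : α) : ℝ :=
  cexp p ψ fun φ => f (insert e ψ.dom) φ - f ψ.dom φ

/-- `π` is an `I^R_S`-restricted policy. -/
def IsRestricted [Fintype α] [DecidableEq α] [Fintype O] (p : (α → O) → ℝ)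
    (I : Finset (Finset α)) (S R : Finset α) (π : (α → O) → Finset α) : Prop :=
  ∀ φ, 0 < p φ → π φ ∈ restrFam I S R

/-- Value of the optimal `I^R_S`-restricted policy on top of `ψ`:
`f_avg(π*(I^R_S, ψ) | ψ)`. -/
noncomputable def optMarg [Fintype α] [DecidableEq α] [Fintype O]
    (f : Finset α → (α → O) → ℝ) (p : (α → O) → ℝ) (I : Finset (Finset α))
    (S R : Finset α) (ψ : PReal α O) : ℝ :=
  sSup ((fun π => margAvg f p ψ π) '' {π | IsRestricted p I S R π})

/-- Policywise submodularity of `f` w.r.t. the prior `p` and the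
independence system `I`. -/
def PolicywiseSubmodular [Fintype α] [DecidableEq α] [Fintype O]
    (f : Finset α → (α → O) → ℝ) (p : (α → O) → ℝ) (I : Finset (Finset α)) : Prop :=
  ∀ ψa ψb : PReal α O, Subreal ψa ψb → ψb.dom ∈ I →
    ∀ R : Finset α, Disjoint R ψb.dom →
      optMarg f p I ψb.dom R ψa ≥ optMarg f p I ψb.dom R ψb

/-- Policy-adaptive submodularity of `f` w.r.t. the prior `p`. -/
def PolicyAdaptiveSubmodular [Fintype α] [DecidableEq α] [Fintype O]
    (f : Finset α → (α → O) → ℝ) (p : (α → O) → ℝ) : Prop :=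
  ∀ ψa ψb : PReal α O, Subreal ψa ψb →
    ∀ π : (α → O) → Finset α, (∀ φ, 0 < p φ → Disjoint (π φ) ψb.dom) →
      margAvg f p ψa π ≥ margAvg f p ψb π

/-- Adaptive submodularity of `f` w.r.t. the prior `p`. -/
def AdaptiveSubmodular [Fintype α] [DecidableEq α] [Fintype O]
    (f : Finset α → (α → O) → ℝ) (p : (α → O) → ℝ) : Prop :=
  ∀ ψa ψb : PReal α O, Subreal ψa ψb → ∀ e ∉ ψb.dom,
    itemMarg f p ψa e ≥ itemMarg f p ψb e

/-- The (unconditional) expected utility `f_avg(π)` of a policy. -/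
noncomputable def favgTot [Fintype α] [Fintype O]
    (f : Finset α → (α → O) → ℝ) (p : (α → O) → ℝ) (π : (α → O) → Finset α) : ℝ :=
  ∑ φ : α → O, p φ * f (π φ) φ

/-- The expected utility `f(∅)` of the empty set. -/
noncomputable def emptyVal [Fintype α] [Fintype O]
    (f : Finset α → (α → O) → ℝ) (p : (α → O) → ℝ) : ℝ :=
  ∑ φ : α → O, p φ * f ∅ φ

/-- `f_avg(π*_R)`: the value of an optimal policy restricted to selecting
independent sets contained in `R`. -/
noncomputable def optVal [Fintype α] [DecidableEq α] [Fintype O]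
    (f : Finset α → (α → O) → ℝ) (p : (α → O) → ℝ) (I : Finset (Finset α))
    (R : Finset α) : ℝ :=
  sSup ((fun π => favgTot f p π) '' {π | IsRestricted p I ∅ R π})

/-- The conditional prior `p(φ | ψ)`. -/
noncomputable def condPrior [Fintype α] [Fintype O] (p : (α → O) → ℝ)
    (ψ : PReal α O) : (α → O) → ℝ :=
  fun φ => if Consistent φ ψ then
    p φ / (∑ φ' : α → O, if Consistent φ' ψ then p φ' else 0) else 0

theorem consistent_default {α O : Type*} [Unique O] (ψ : PReal α O) : Consistent default ψ :=
  fun _ _ => Subsingleton.elim _ _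

theorem monotone_card_cast {α : Type*} : Monotone fun S : Finset α => (S.card : ℝ) :=
  Nat.mono_cast.comp card_mono

section Deterministic

variable {α O : Type*} [Fintype α] [DecidableEq α] [Fintype O] [Unique O]
  {p : (α → O) → ℝ}

theorem cexp_eq_apply_default (hp : p default ≠ 0) (ψ : PReal α O) (g : (α → O) → ℝ) :
    cexp p ψ g = g default := by
  simp only [cexp, Fintype.sum_unique, consistent_default, if_true]
  field_simp

theorem mem_restrFam_univ {S R A : Finset α} : A ∈ restrFam univ S R ↔ A ⊆ R := by
  simp [restrFam]

theorem isRestricted_univ_iff (hp : 0 < p default) {S R : Finset α}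
    {π : (α → O) → Finset α} : IsRestricted p univ S R π ↔ π default ⊆ R := by
  refine ⟨fun h => mem_restrFam_univ.mp (h default hp), fun h φ _ => ?_⟩
  rw [Subsingleton.elim φ default, mem_restrFam_univ]
  exact h

theorem sSup_image_isRestricted_univ (hp : 0 < p default) (S R : Finset α)
    {F : Finset α → ℝ} (hF : Monotone F) :
    sSup ((fun π => F (π default)) '' {π | IsRestricted p univ S R π}) = F R := by
  refine IsGreatest.csSup_eq ⟨⟨fun _ => R, (isRestricted_univ_iff hp).mpr subset_rfl, rfl⟩, ?_⟩
  rintro _ ⟨π, hπ, rfl⟩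
  exact hF ((isRestricted_univ_iff hp).mp hπ)

theorem optMarg_univ_of_monotone (hp : 0 < p default) {f : Finset α → (α → O) → ℝ}
    (hf : Monotone fun S => f S default) (S R : Finset α) (ψ : PReal α O) :
    optMarg f p univ S R ψ = f (ψ.dom ∪ R) default - f ψ.dom default := by
  have hmarg : (fun π => margAvg f p ψ π) =
      fun π => f (ψ.dom ∪ π default) default - f ψ.dom default :=
    funext fun π => cexp_eq_apply_default hp.ne' ψ _
  rw [optMarg, hmarg, sSup_image_isRestricted_univ hp S R
    (F := fun A => f (ψ.dom ∪ A) default - f ψ.dom default)]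
  intro A B hAB
  exact sub_le_sub_right (hf (union_subset_union_right hAB)) _

theorem optVal_univ_of_monotone (hp : 0 < p default) {f : Finset α → (α → O) → ℝ}
    (hf : Monotone fun S => f S default) (R : Finset α) :
    optVal f p univ R = p default * f R default := by
  have hval : (fun π => favgTot f p π) = fun π => p default * f (π default) default :=
    funext fun π => by
      unfold favgTot
      convert Fintype.sum_unique fun φ => p φ * f (π φ) φ
  rw [optVal, hval, sSup_image_isRestricted_univ hp ∅ R
    (F := fun A => p default * f A default)]
  exact fun A B hAB => mul_le_mul_of_nonneg_left (hf hAB) hp.le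

theorem optMarg_card_of_disjoint (hp : 0 < p default) (S : Finset α) {R : Finset α}
    {ψ : PReal α O} (hR : Disjoint R ψ.dom) :
    optMarg (fun S (_ : α → O) => (S.card : ℝ)) p univ S R ψ = R.card := by
  rw [optMarg_univ_of_monotone hp monotone_card_cast, union_comm,
    card_union_of_disjoint hR]
  push_cast
  ring

theorem policywiseSubmodular_card (hp : 0 < p default) :
    PolicywiseSubmodular (fun S (_ : α → O) => (S.card : ℝ)) p univ := by
  intro ψa ψb hab _ R hR
  rw [optMarg_card_of_disjoint hp _ hR,
    optMarg_card_of_disjoint hp _ (hR.mono_right hab.1)]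

theorem optVal_card (hp : 0 < p default) (R : Finset α) :
    optVal (fun S (_ : α → O) => (S.card : ℝ)) p univ R = p default * R.card :=
  optVal_univ_of_monotone hp monotone_card_cast R

end Deterministic

theorem Finset.sum_mul_card_eq_sum_sum_filter_mem {α M : Type*} [Fintype α] [DecidableEq α]
    [CommSemiring M] (q : Finset α → M) :
    ∑ T, q T * T.card = ∑ a, ∑ T ∈ univ.filter (fun T => a ∈ T), q T := by
  calc ∑ T, q T * T.card = ∑ T, ∑ _a ∈ T, q T := by simp [mul_comm]
    _ = ∑ a, ∑ T ∈ univ.filter (fun T => a ∈ T), q T := sum_comm' (by simp)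

theorem sampling_gap_lower_bound_general (r : ℝ)
    (q : Finset Unit → ℝ)
    (hqr : ∑ T ∈ univ.filter (fun T : Finset Unit => () ∈ T), q T = r) :
    PolicywiseSubmodular (fun S (_ : Unit → Unit) => (S.card : ℝ))
        (fun _ => (1 : ℝ)) (univ : Finset (Finset Unit)) ∧
    (∑ T : Finset Unit, q T *
        optVal (fun S (_ : Unit → Unit) => (S.card : ℝ)) (fun _ => (1 : ℝ)) univ T) = r ∧
    optVal (fun S (_ : Unit → Unit) => (S.card : ℝ)) (fun _ => (1 : ℝ)) univ univ = 1 ∧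
    (r ≠ 0 →
      optVal (fun S (_ : Unit → Unit) => (S.card : ℝ)) (fun _ => (1 : ℝ)) univ univ /
        (∑ T : Finset Unit, q T *
          optVal (fun S (_ : Unit → Unit) => (S.card : ℝ)) (fun _ => (1 : ℝ)) univ T)
        = 1 / r) := by
  have hV : optVal (fun S (_ : Unit → Unit) => (S.card : ℝ)) (fun _ => (1 : ℝ)) univ univ = 1 := by
    rw [optVal_card (p := fun _ => 1) one_pos]
    simp
  have hE : (∑ T : Finset Unit, q T *
      optVal (fun S (_ : Unit → Unit) => (S.card : ℝ)) (fun _ => (1 : ℝ)) univ T) = r := by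
    simp_rw [optVal_card (p := fun _ => 1) one_pos, one_mul]
    rw [sum_mul_card_eq_sum_sum_filter_mem, Fintype.sum_unique, ← hqr]
  exact ⟨policywiseSubmodular_card (p := fun _ => 1) one_pos, hE, hV, fun _ => by rw [hV, hE]⟩

/-- sampling gap lower bound of `1/r`: the single-item instance
`V = {e}`, one state, `f(∅) = 0`, `f({e}) = 1`, `I = {∅, {e}}` is policywise
submodular, `E_T[f_avg(π*_T)] = r` when `Pr[e ∈ T] = r`, `f_avg(π*_V) = 1`, and
hence the ratio is `1/r`. -/
theorem sampling_gap_lower_bound (r : ℝ) (hr0 : 0 ≤ r) (hr1 : r ≤ 1)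
    (q : Finset Unit → ℝ) (hq0 : ∀ T, 0 ≤ q T)
    (hq1 : ∑ T : Finset Unit, q T = 1)
    (hqr : ∑ T ∈ univ.filter (fun T : Finset Unit => () ∈ T), q T = r) :
    PolicywiseSubmodular (fun S (_ : Unit → Unit) => (S.card : ℝ))
        (fun _ => (1 : ℝ)) (univ : Finset (Finset Unit)) ∧
    (∑ T : Finset Unit, q T *
        optVal (fun S (_ : Unit → Unit) => (S.card : ℝ)) (fun _ => (1 : ℝ)) univ T) = r ∧
    optVal (fun S (_ : Unit → Unit) => (S.card : ℝ)) (fun _ => (1 : ℝ)) univ univ = 1 ∧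
    (r ≠ 0 →
      optVal (fun S (_ : Unit → Unit) => (S.card : ℝ)) (fun _ => (1 : ℝ)) univ univ /
        (∑ T : Finset Unit, q T *
          optVal (fun S (_ : Unit → Unit) => (S.card : ℝ)) (fun _ => (1 : ℝ)) univ T)
        = 1 / r) :=
  sampling_gap_lower_bound_general r q hqr
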